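/- arXiv:2406.10155 — 7 statements merged into one kernel-verified Lean document; each statement's English description precedes it below -/
import Mathlib

section
/- Let f : ℝ × ℝⁿ → ℝ be a smooth positive function, u := log f, and let σ : J → ℝⁿ be a free-falling trajectory for f on an interval J ⊆ ℝ. Then for every s ∈ J, (d/ds)‖σ'(s)‖² = −2·[2·∂ₜu(s,σ(s)) + ⟨∇ₓu(s,σ(s)), σ'(s)⟩]·‖σ'(s)‖². -/
local notation "⟪" x ", " y "⟫_ℝ" => @inner ℝ _ _ x y
open Real Set Filter Topology

/-- `∂ₜ u (s,x)` where `u = log f`. -/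
noncomputable def ut {n : ℕ} (f : ℝ × EuclideanSpace ℝ (Fin n) → ℝ) (s : ℝ)
    (x : EuclideanSpace ℝ (Fin n)) : ℝ :=
  deriv (fun t : ℝ => Real.log (f (t, x))) s

/-- `∇ₓ u (s,x)`, the spatial gradient of `u = log f`. -/
noncomputable def gradu {n : ℕ} (f : ℝ × EuclideanSpace ℝ (Fin n) → ℝ) (s : ℝ)
    (x : EuclideanSpace ℝ (Fin n)) : EuclideanSpace ℝ (Fin n) :=
  gradient (fun y => Real.log (f (s, y))) x

/-- `σ` (with derivative `σ'`) is a free-falling trajectory for `f` on `J`: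
`σ'' + 2[∂ₜu + ⟨∇ₓu, σ'⟩]·σ' − ‖σ'‖²·∇ₓu = 0` on `J`, where `u = log f`. -/
def IsFreeFall {n : ℕ} (f : ℝ × EuclideanSpace ℝ (Fin n) → ℝ)
    (σ σ' : ℝ → EuclideanSpace ℝ (Fin n)) (J : Set ℝ) : Prop :=
  (∀ s ∈ J, HasDerivAt σ (σ' s) s) ∧
  ∀ s ∈ J, HasDerivAt σ'
    (-((2 * (ut f s (σ s) + ⟪gradu f s (σ s), σ' s⟫_ℝ)) • σ' s)
      + (‖σ' s‖ ^ 2) • gradu f s (σ s)) s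

/-- along a free-falling trajectory,
`(d/ds)‖σ'(s)‖² = −2·[2·∂ₜu(s,σ(s)) + ⟨∇ₓu(s,σ(s)), σ'(s)⟩]·‖σ'(s)‖²`. -/
theorem stmt1 {n : ℕ} (f : ℝ × EuclideanSpace ℝ (Fin n) → ℝ)
    (hf : ContDiff ℝ (⊤ : ℕ∞) f) (hfpos : ∀ p, 0 < f p)
    (J : Set ℝ) (hJ : Convex ℝ J)
    (σ σ' : ℝ → EuclideanSpace ℝ (Fin n))
    (h : IsFreeFall f σ σ' J) :
    ∀ s ∈ J, HasDerivAt (fun r => ‖σ' r‖ ^ 2)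
      (-2 * (2 * ut f s (σ s) + ⟪gradu f s (σ s), σ' s⟫_ℝ) * ‖σ' s‖ ^ 2) s := by
  intro s hs
  have hσ'' := h.2 s hs
  have hinner := hσ''.inner ℝ hσ''
  have heq : (fun r => ‖σ' r‖ ^ 2) = fun r => ⟪σ' r, σ' r⟫_ℝ := by
    funext r; rw [real_inner_self_eq_norm_sq]
  rw [heq]
  refine hinner.congr_deriv ?_
  set a := ut f s (σ s)
  set g := gradu f s (σ s)
  set v := σ' s
  simp only [inner_add_left, inner_add_right, inner_smul_left, inner_smul_right,
    inner_neg_left, inner_neg_right, real_inner_self_eq_norm_sq, RCLike.ofReal_real_eq_id,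
    id, map_mul, map_ofNat, conj_trivial, real_inner_comm g v]
  ring
end

section
/- Let f : ℝ × ℝⁿ → ℝ be a smooth positive function, u := log f, and let σ : J → ℝⁿ be a free-falling trajectory for f on an interval J ⊆ ℝ containing 0. Then the function s ↦ f(s,σ(s))² · ‖σ'(s)‖² · exp(2·∫₀ˢ ∂ₜu(r,σ(r)) dr) is constant on J; equivalently, for all s ∈ J, ‖σ'(s)‖² = (A / f(s,σ(s))²) · exp(−2·∫₀ˢ ∂ₜu(r,σ(r)) dr) with A = f(0,σ(0))²·‖σ'(0)‖². -/
local notation "⟪" x ", " y "⟫_ℝ" => @inner ℝ _ _ x y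
open Real Set Filter Topology

lemma ut_eq_fderiv {n : ℕ} {f : ℝ × EuclideanSpace ℝ (Fin n) → ℝ}
    (hL : Differentiable ℝ (fun p => Real.log (f p))) (s : ℝ) (x : EuclideanSpace ℝ (Fin n)) :
    ut f s x = fderiv ℝ (fun p => Real.log (f p)) (s, x) (1, 0) := by
  have h1 : HasDerivAt (fun t : ℝ => (t, x)) ((1 : ℝ), (0 : EuclideanSpace ℝ (Fin n))) s :=
    HasDerivAt.prodMk (hasDerivAt_id s) (hasDerivAt_const s x)
  have h2 : HasDerivAt (fun t : ℝ => Real.log (f (t, x)))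
      (fderiv ℝ (fun p => Real.log (f p)) (s, x) (1, 0)) s :=
    by have := (hL (s, x)).hasFDerivAt.comp_hasDerivAt s h1; exact this
  exact h2.deriv

lemma inner_gradu_eq {n : ℕ} {f : ℝ × EuclideanSpace ℝ (Fin n) → ℝ}
    (hL : Differentiable ℝ (fun p => Real.log (f p))) (s : ℝ)
    (x v : EuclideanSpace ℝ (Fin n)) :
    ⟪gradu f s x, v⟫_ℝ = fderiv ℝ (fun p => Real.log (f p)) (s, x) (0, v) := by
  have h1 : HasFDerivAt (fun y => Real.log (f (s, y)))
      ((fderiv ℝ (fun p => Real.log (f p)) (s, x)).comp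
        (ContinuousLinearMap.inr ℝ ℝ (EuclideanSpace ℝ (Fin n)))) x :=
    (hL (s, x)).hasFDerivAt.comp x (hasFDerivAt_prodMk_right s x)
  rw [gradu, gradient, h1.fderiv, InnerProductSpace.toDual_symm_apply]
  rfl

lemma log_chain {n : ℕ} {f : ℝ × EuclideanSpace ℝ (Fin n) → ℝ}
    (hL : Differentiable ℝ (fun p => Real.log (f p)))
    {σ : ℝ → EuclideanSpace ℝ (Fin n)} {v : EuclideanSpace ℝ (Fin n)} {s : ℝ}
    (hσ : HasDerivAt σ v s) :
    HasDerivAt (fun t => Real.log (f (t, σ t))) (ut f s (σ s) + ⟪gradu f s (σ s), v⟫_ℝ) s := by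
  have h1 : HasDerivAt (fun t : ℝ => (t, σ t)) ((1 : ℝ), v) s := HasDerivAt.prodMk (hasDerivAt_id s) hσ
  have h2 := (hL (s, σ s)).hasFDerivAt.comp_hasDerivAt s h1
  refine h2.congr_deriv ?_
  rw [ut_eq_fderiv hL, inner_gradu_eq hL, ← ContinuousLinearMap.map_add]
  norm_num

/-- along a free-falling trajectory,
`f(s,σ(s))²·‖σ'(s)‖²·exp(2∫₀ˢ ∂ₜu(r,σ(r)) dr)` is constant on `J`; equivalently
`‖σ'(s)‖² = (A / f(s,σ(s))²)·exp(−2∫₀ˢ ∂ₜu(r,σ(r)) dr)` with `A = f(0,σ(0))²·‖σ'(0)‖²`. -/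
theorem stmt2 {n : ℕ} (f : ℝ × EuclideanSpace ℝ (Fin n) → ℝ)
    (hf : ContDiff ℝ (⊤ : ℕ∞) f) (hfpos : ∀ p, 0 < f p)
    (J : Set ℝ) (hJ : Convex ℝ J) (h0 : (0 : ℝ) ∈ J)
    (σ σ' : ℝ → EuclideanSpace ℝ (Fin n))
    (h : IsFreeFall f σ σ' J) :
    (∀ s ∈ J, f (s, σ s) ^ 2 * ‖σ' s‖ ^ 2 * Real.exp (2 * ∫ r in (0:ℝ)..s, ut f r (σ r))
        = f (0, σ 0) ^ 2 * ‖σ' 0‖ ^ 2)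
    ∧ ∀ s ∈ J, ‖σ' s‖ ^ 2
        = (f (0, σ 0) ^ 2 * ‖σ' 0‖ ^ 2) / f (s, σ s) ^ 2
            * Real.exp (-(2 * ∫ r in (0:ℝ)..s, ut f r (σ r))) := by
  have hLc : ContDiff ℝ (⊤ : ℕ∞) (fun p => Real.log (f p)) := hf.log (fun p => (hfpos p).ne')
  have hL : Differentiable ℝ (fun p => Real.log (f p)) := hLc.differentiable (by simp)
  set φ : ℝ → ℝ := fun r => ut f r (σ r) with hφdef
  set I : ℝ → ℝ := fun t => ∫ r in (0:ℝ)..t, ut f r (σ r) with hIdef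
  set G : ℝ → ℝ := fun t => ‖σ' t‖ ^ 2 * Real.exp (2 * (Real.log (f (t, σ t)) + I t)) with hGdef
  -- continuity of φ on J
  have hσcont : ContinuousOn σ J := fun r hr => (h.1 r hr).continuousAt.continuousWithinAt
  have hφcont : ContinuousOn φ J := by
    have h1 : ContinuousOn (fun r => fderiv ℝ (fun p => Real.log (f p)) (r, σ r)) J :=
      (hLc.continuous_fderiv (by simp)).comp_continuousOn (continuousOn_id.prodMk hσcont)
    have h2 := h1.clm_apply (continuousOn_const (c := ((1 : ℝ), (0 : EuclideanSpace ℝ (Fin n)))))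
    exact h2.congr fun r _ => ut_eq_fderiv hL r (σ r)
  have key : ∀ y : ℝ, 0 < y → Real.exp (2 * Real.log y) = y ^ 2 := fun y hy => by
    rw [two_mul, Real.exp_add, Real.exp_log hy, sq]
  -- constancy of G
  have hGconst : ∀ s ∈ J, G s = G 0 := by
    intro s hs
    have hKJ : uIcc (0:ℝ) s ⊆ J := by
      rw [← segment_eq_uIcc]; exact hJ.segment_subset h0 hs
    have hG0 : ∀ x ∈ uIcc (0:ℝ) s, HasDerivWithinAt G 0 (uIcc (0:ℝ) s) x := by
      intro x hx
      haveI : Fact (x ∈ uIcc (0:ℝ) s) := ⟨hx⟩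
      have hxJ : x ∈ J := hKJ hx
      have h1 : HasDerivWithinAt (fun t => Real.log (f (t, σ t)))
          (ut f x (σ x) + ⟪gradu f x (σ x), σ' x⟫_ℝ) (uIcc (0:ℝ) s) x :=
        (log_chain hL (h.1 x hxJ)).hasDerivWithinAt
      have h2 : HasDerivWithinAt I (φ x) (uIcc (0:ℝ) s) x := by
        apply intervalIntegral.integral_hasDerivWithinAt_right (t := uIcc (0:ℝ) s)
        · exact ((hφcont.mono hKJ).mono (uIcc_subset_uIcc left_mem_uIcc hx)).intervalIntegrable
        · exact ⟨uIcc (0:ℝ) s, self_mem_nhdsWithin,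
            (hφcont.mono hKJ).aestronglyMeasurable measurableSet_uIcc⟩
        · exact (hφcont.mono hKJ) x hx
      set a := ut f x (σ x)
      set b := ⟪gradu f x (σ x), σ' x⟫_ℝ
      set N := ‖σ' x‖ ^ 2 with hN
      set c := -((2 * (a + b)) • σ' x) + N • gradu f x (σ x) with hc
      have h3 : HasDerivWithinAt (fun t => ‖σ' t‖ ^ 2)
          (⟪σ' x, c⟫_ℝ + ⟪c, σ' x⟫_ℝ) (uIcc (0:ℝ) s) x := by
        have := ((h.2 x hxJ).inner ℝ (h.2 x hxJ)).hasDerivWithinAt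
          (s := uIcc (0:ℝ) s)
        simp only [← real_inner_self_eq_norm_sq]
        exact this
      have hE : HasDerivWithinAt (fun t => Real.exp (2 * (Real.log (f (t, σ t)) + I t)))
          (Real.exp (2 * (Real.log (f (x, σ x)) + I x)) * (2 * ((a + b) + φ x)))
          (uIcc (0:ℝ) s) x := ((h1.add h2).const_mul 2).exp
      have hmul := h3.mul hE
      have hcval : ⟪c, σ' x⟫_ℝ = -(2 * (a + b)) * N + N * b := by
        rw [hc, inner_add_left, inner_smul_left, inner_neg_left, inner_smul_left,
          real_inner_self_eq_norm_sq]
        simp only [starRingEnd_apply, star_trivial]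
        ring
      have hcval' : ⟪σ' x, c⟫_ℝ = -(2 * (a + b)) * N + N * b := by
        rw [real_inner_comm]; exact hcval
      refine hmul.congr_deriv ?_
      rw [hcval, hcval']
      have hφx : φ x = a := rfl
      rw [hφx]
      ring
    have := Convex.norm_image_sub_le_of_norm_hasDerivWithin_le (C := 0) (f' := fun _ => (0:ℝ))
      hG0 (fun x _ => by simp) (convex_uIcc 0 s) left_mem_uIcc right_mem_uIcc
    simp only [zero_mul, norm_le_zero_iff, sub_eq_zero] at this
    exact this
  have hGs : ∀ s : ℝ, G s = f (s, σ s) ^ 2 * ‖σ' s‖ ^ 2 * Real.exp (2 * I s) := by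
    intro s
    rw [hGdef]
    simp only [mul_add, Real.exp_add, key _ (hfpos (s, σ s))]
    ring
  have hG0' : G 0 = f (0, σ 0) ^ 2 * ‖σ' 0‖ ^ 2 := by
    rw [hGs]
    have : I 0 = 0 := intervalIntegral.integral_same
    rw [this]
    simp
  have stmt1 : ∀ s ∈ J, f (s, σ s) ^ 2 * ‖σ' s‖ ^ 2
      * Real.exp (2 * ∫ r in (0:ℝ)..s, ut f r (σ r)) = f (0, σ 0) ^ 2 * ‖σ' 0‖ ^ 2 := by
    intro s hs
    have := hGconst s hs
    rw [hGs s, hG0'] at this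
    exact this
  refine ⟨stmt1, fun s hs => ?_⟩
  have h1 := stmt1 s hs
  have hf2 : (0:ℝ) < f (s, σ s) ^ 2 := pow_pos (hfpos _) 2
  have hE : (0:ℝ) < Real.exp (2 * ∫ r in (0:ℝ)..s, ut f r (σ r)) := Real.exp_pos _
  rw [Real.exp_neg]
  have hfne : f (s, σ s) ≠ 0 := (hfpos _).ne'
  field_simp
  linear_combination h1
end

section
/- Let f : ℝ × ℝⁿ → ℝ be a smooth positive function, u := log f, let T > 0, and suppose there are constants m > 0 and L ∈ ℝ such that f(t,x) ≥ m and ∂ₜu(t,x) ≥ L for all (t,x) ∈ [0,T] × ℝⁿ. Then every free-falling trajectory σ : J → ℝⁿ for f with 0 ∈ J ⊆ [0,T] satisfies ‖σ'(s)‖ ≤ (f(0,σ(0))·‖σ'(0)‖ / m) · exp(|L|·T) for all s ∈ J, s ≥ 0; in particular σ' is bounded on J ∩ [0,T]. -/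
local notation "⟪" x ", " y "⟫_ℝ" => @inner ℝ _ _ x y
open Real Set Filter Topology

/-- if `f ≥ m > 0` and `∂ₜu ≥ L` on `[0,T] × ℝⁿ`, then any free-falling
trajectory with `0 ∈ J ⊆ [0,T]` has
`‖σ'(s)‖ ≤ (f(0,σ(0))·‖σ'(0)‖/m)·exp(|L|·T)` for all `s ∈ J` with `s ≥ 0`. -/
theorem stmt3 {n : ℕ} (f : ℝ × EuclideanSpace ℝ (Fin n) → ℝ)
    (hf : ContDiff ℝ (⊤ : ℕ∞) f) (hfpos : ∀ p, 0 < f p)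
    (T : ℝ) (hT : 0 < T) (m : ℝ) (hm : 0 < m) (L : ℝ)
    (hfm : ∀ t ∈ Set.Icc (0:ℝ) T, ∀ x, m ≤ f (t, x))
    (hL : ∀ t ∈ Set.Icc (0:ℝ) T, ∀ x, L ≤ ut f t x)
    (J : Set ℝ) (hJ : Convex ℝ J) (h0 : (0 : ℝ) ∈ J) (hJT : J ⊆ Set.Icc 0 T)
    (σ σ' : ℝ → EuclideanSpace ℝ (Fin n))
    (h : IsFreeFall f σ σ' J) :
    ∀ s ∈ J, 0 ≤ s →
      ‖σ' s‖ ≤ f (0, σ 0) * ‖σ' 0‖ / m * Real.exp (|L| * T) := by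
  intro s hsJ hs0
  have hfne : ∀ p, f p ≠ 0 := fun p => (hfpos p).ne'
  have hUd : Differentiable ℝ fun p : ℝ × EuclideanSpace ℝ (Fin n) => Real.log (f p) :=
    (hf.log hfne).differentiable (by simp)
  set U : ℝ × EuclideanSpace ℝ (Fin n) → ℝ := fun p => Real.log (f p) with hUdef
  set D : (ℝ × EuclideanSpace ℝ (Fin n)) → (ℝ × EuclideanSpace ℝ (Fin n) →L[ℝ] ℝ) :=
    fun p => fderiv ℝ U p with hDdef
  have hσd := h.1
  have hσ'd := h.2
  -- partial time derivative
  have hut : ∀ t x, ut f t x = D (t, x) (1, 0) := by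
    intro t x
    have h1 : HasDerivAt (fun r : ℝ => (r, x)) ((1:ℝ), (0 : EuclideanSpace ℝ (Fin n))) t :=
      (hasDerivAt_id t).prodMk (hasDerivAt_const t x)
    have h2 := ((hUd (t, x)).hasFDerivAt).comp_hasDerivAt t h1
    show deriv (fun r : ℝ => Real.log (f (r, x))) t = _
    exact h2.deriv
  -- spatial gradient pairing
  have hgrad : ∀ t x (v : EuclideanSpace ℝ (Fin n)), ⟪gradu f t x, v⟫_ℝ = D (t, x) (0, v) := by
    intro t x v
    have h1 : HasFDerivAt (fun y : EuclideanSpace ℝ (Fin n) => (t, y))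
        ((0 : EuclideanSpace ℝ (Fin n) →L[ℝ] ℝ).prod
          (ContinuousLinearMap.id ℝ (EuclideanSpace ℝ (Fin n)))) x :=
      (hasFDerivAt_const t x).prodMk (hasFDerivAt_id x)
    have h2 := ((hUd (t, x)).hasFDerivAt).comp x h1
    have h3 : fderiv ℝ (fun y => Real.log (f (t, y))) x
        = (D (t, x)).comp ((0 : EuclideanSpace ℝ (Fin n) →L[ℝ] ℝ).prod
          (ContinuousLinearMap.id ℝ (EuclideanSpace ℝ (Fin n)))) := h2.fderiv
    have h4 : gradu f t x = (InnerProductSpace.toDual ℝ (EuclideanSpace ℝ (Fin n))).symm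
        (fderiv ℝ (fun y => Real.log (f (t, y))) x) := rfl
    rw [h4, InnerProductSpace.toDual_symm_apply, h3]
    simp
  -- derivative of u along the curve
  have hw : ∀ t ∈ J, HasDerivAt (fun r => Real.log (f (r, σ r)))
      (ut f t (σ t) + ⟪gradu f t (σ t), σ' t⟫_ℝ) t := by
    intro t ht
    have h1 : HasDerivAt (fun r : ℝ => (r, σ r)) ((1:ℝ), σ' t) t :=
      (hasDerivAt_id t).prodMk (hσd t ht)
    have h2 := ((hUd (t, σ t)).hasFDerivAt).comp_hasDerivAt t h1
    have h3 : (D (t, σ t)) ((1:ℝ), σ' t)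
        = ut f t (σ t) + ⟪gradu f t (σ t), σ' t⟫_ℝ := by
      rw [hut, hgrad]
      have he : ((1:ℝ), σ' t) = ((1:ℝ), (0 : EuclideanSpace ℝ (Fin n)))
          + ((0:ℝ), σ' t) := by simp
      rw [he, map_add]
    rw [← h3]
    exact h2
  -- derivative of f along the curve
  have hF : ∀ t ∈ J, HasDerivAt (fun r => f (r, σ r))
      (f (t, σ t) * (ut f t (σ t) + ⟪gradu f t (σ t), σ' t⟫_ℝ)) t := by
    intro t ht
    have h1 := (hw t ht).exp
    have heq : (fun r => Real.exp (Real.log (f (r, σ r)))) = fun r => f (r, σ r) :=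
      funext fun r => Real.exp_log (hfpos _)
    rw [heq, Real.exp_log (hfpos _)] at h1
    exact h1
  -- the energy E r = f(r,σ r)² ⟪σ' r, σ' r⟫ satisfies E' = -2 uₜ E
  have hE : ∀ t ∈ J, HasDerivAt (fun r => (f (r, σ r))^2 * ⟪σ' r, σ' r⟫_ℝ)
      (-2 * ut f t (σ t) * ((f (t, σ t))^2 * ⟪σ' t, σ' t⟫_ℝ)) t := by
    intro t ht
    have h1 : HasDerivAt (fun r => (f (r, σ r))^2 * ⟪σ' r, σ' r⟫_ℝ) _ t := ((hF t ht).pow 2).mul (HasDerivAt.inner ℝ (hσ'd t ht) (hσ'd t ht))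
    convert h1 using 1
    simp only [inner_add_right, inner_add_left, inner_neg_right, inner_neg_left,
      real_inner_smul_left, real_inner_smul_right, real_inner_self_eq_norm_sq, Pi.pow_apply]
    rw [real_inner_comm (σ' t) (gradu f t (σ t))]
    push_cast
    ring
  -- G r = E r · exp(-(2|L|) r) is nonincreasing on [0, s]
  set E : ℝ → ℝ := fun r => (f (r, σ r))^2 * ⟪σ' r, σ' r⟫_ℝ with hEdef
  set G : ℝ → ℝ := fun r => E r * Real.exp (-(2 * |L|) * r) with hGdef
  have hG : ∀ t ∈ J, HasDerivAt G
      ((-2 * ut f t (σ t) * E t) * Real.exp (-(2 * |L|) * t)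
        + E t * (Real.exp (-(2 * |L|) * t) * (-(2 * |L|)))) t := by
    intro t ht
    have hx : HasDerivAt (fun r : ℝ => -(2 * |L|) * r) (-(2 * |L|)) t := by
      simpa using (hasDerivAt_id t).const_mul (-(2 * |L|))
    exact (hE t ht).mul hx.exp
  have hEnn : ∀ t, 0 ≤ E t := by
    intro t
    exact mul_nonneg (sq_nonneg _) real_inner_self_nonneg
  have hsub : Set.Icc (0:ℝ) s ⊆ J := hJ.ordConnected.out h0 hsJ
  have hanti : AntitoneOn G (Set.Icc (0:ℝ) s) := by
    apply antitoneOn_of_deriv_nonpos (convex_Icc 0 s)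
    · exact fun t ht => (hG t (hsub ht)).continuousAt.continuousWithinAt
    · intro t ht
      rw [interior_Icc] at ht
      exact ((hG t (hsub (Set.Ioo_subset_Icc_self ht))).differentiableAt).differentiableWithinAt
    · intro t ht
      rw [interior_Icc] at ht
      have htJ : t ∈ J := hsub (Set.Ioo_subset_Icc_self ht)
      rw [(hG t htJ).deriv]
      have hLt : L ≤ ut f t (σ t) := hL t (hJT htJ) (σ t)
      have h1 : -2 * ut f t (σ t) - 2 * |L| ≤ 0 := by
        have := neg_abs_le L
        linarith
      have h2 : 0 < Real.exp (-(2 * |L|) * t) := Real.exp_pos _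
      have h3 := hEnn t
      have h4 : (-2 * ut f t (σ t) - 2 * |L|) * (E t * Real.exp (-(2 * |L|) * t)) ≤ 0 :=
        mul_nonpos_of_nonpos_of_nonneg h1 (mul_nonneg h3 h2.le)
      have h5 : -2 * ut f t (σ t) * E t * Real.exp (-(2 * |L|) * t)
          + E t * (Real.exp (-(2 * |L|) * t) * -(2 * |L|))
          = (-2 * ut f t (σ t) - 2 * |L|) * (E t * Real.exp (-(2 * |L|) * t)) := by ring
      rw [h5]
      exact h4
  have hGs : G s ≤ G 0 := hanti (Set.left_mem_Icc.mpr hs0) (Set.right_mem_Icc.mpr hs0) hs0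
  have hG0 : G 0 = E 0 := by simp [hGdef]
  -- E s ≤ E 0 · exp(2|L| T)
  have hEs : E s ≤ E 0 * Real.exp (2 * |L| * T) := by
    have h1 : E s = G s * Real.exp (2 * |L| * s) := by
      show E s = E s * Real.exp (-(2 * |L|) * s) * Real.exp (2 * |L| * s)
      rw [mul_assoc, ← Real.exp_add]
      have he0 : -(2 * |L|) * s + 2 * |L| * s = 0 := by ring
      rw [he0, Real.exp_zero, mul_one]
    have h2 : G s * Real.exp (2 * |L| * s) ≤ E 0 * Real.exp (2 * |L| * s) := by
      rw [← hG0]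
      exact mul_le_mul_of_nonneg_right hGs (Real.exp_pos _).le
    have hsT : s ≤ T := (hJT hsJ).2
    have h3 : Real.exp (2 * |L| * s) ≤ Real.exp (2 * |L| * T) := by
      apply Real.exp_le_exp.mpr
      have : (0:ℝ) ≤ 2 * |L| := by positivity
      nlinarith
    calc E s = G s * Real.exp (2 * |L| * s) := h1
      _ ≤ E 0 * Real.exp (2 * |L| * s) := h2
      _ ≤ E 0 * Real.exp (2 * |L| * T) := mul_le_mul_of_nonneg_left h3 (hEnn 0)
  -- conclude
  have hsT : s ∈ Set.Icc (0:ℝ) T := hJT hsJ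
  have hmFs : m ≤ f (s, σ s) := hfm s hsT (σ s)
  have hmF0 : (0:ℝ) < f (0, σ 0) := hfpos _
  have hexp2 : Real.exp (2 * |L| * T) = (Real.exp (|L| * T))^2 := by
    rw [sq, ← Real.exp_add]; ring_nf
  have hkey : (m * ‖σ' s‖)^2 ≤ (f (0, σ 0) * ‖σ' 0‖ * Real.exp (|L| * T))^2 := by
    have h1 : (m * ‖σ' s‖)^2 ≤ E s := by
      rw [hEdef]
      simp only [real_inner_self_eq_norm_sq]
      have hm2 : m^2 ≤ f (s, σ s)^2 := pow_le_pow_left₀ hm.le hmFs 2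
      rw [mul_pow]
      exact mul_le_mul_of_nonneg_right hm2 (sq_nonneg ‖σ' s‖)
    have h2 : E 0 * Real.exp (2 * |L| * T) = (f (0, σ 0) * ‖σ' 0‖ * Real.exp (|L| * T))^2 := by
      rw [hEdef]
      simp only [real_inner_self_eq_norm_sq]
      rw [hexp2]
      ring
    calc (m * ‖σ' s‖)^2 ≤ E s := h1
      _ ≤ E 0 * Real.exp (2 * |L| * T) := hEs
      _ = _ := h2
  have hrhs : (0:ℝ) ≤ f (0, σ 0) * ‖σ' 0‖ * Real.exp (|L| * T) := by positivity
  have hmul : m * ‖σ' s‖ ≤ f (0, σ 0) * ‖σ' 0‖ * Real.exp (|L| * T) :=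
    le_of_pow_le_pow_left₀ two_ne_zero hrhs hkey
  rw [div_mul_eq_mul_div, le_div_iff₀ hm]
  linarith [hmul]
end

section
/- Let f : ℝ × ℝⁿ → ℝ be a smooth positive function and let σ : [0,b) → ℝⁿ be a free-falling trajectory for f with 0 < b < ∞. Then σ extends to a C² free-falling trajectory on [0,b] if and only if there exists a sequence sₙ ∈ [0,b) with sₙ ↗ b such that the sequence (σ(sₙ), σ'(sₙ)) converges in ℝⁿ × ℝⁿ. -/
local notation "⟪" x ", " y "⟫_ℝ" => @inner ℝ _ _ x y
open Real Set Filter Topology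
open Metric

variable {n : ℕ}

local notation "Evec" => EuclideanSpace ℝ (Fin n)

/-- the vector field -/
noncomputable def VF (f : ℝ × EuclideanSpace ℝ (Fin n) → ℝ) (t : ℝ)
    (y : EuclideanSpace ℝ (Fin n) × EuclideanSpace ℝ (Fin n)) :
    EuclideanSpace ℝ (Fin n) × EuclideanSpace ℝ (Fin n) :=
  (y.2, -((2 * (ut f t y.1 + ⟪gradu f t y.1, y.2⟫_ℝ)) • y.2) + (‖y.2‖ ^ 2) • gradu f t y.1)

theorem ut_eq (f : ℝ × Evec → ℝ) (hf : ContDiff ℝ 2 f)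
    (hfpos : ∀ p, 0 < f p) (s : ℝ) (x : Evec) :
    ut f s x = fderiv ℝ (fun p => Real.log (f p)) (s, x) (1, 0) := by
  have hg : ContDiff ℝ 2 (fun p => Real.log (f p)) := hf.log (fun p => (hfpos p).ne')
  have h1 : HasDerivAt (fun t : ℝ => Real.log (f (t, x)))
      (fderiv ℝ (fun p => Real.log (f p)) (s, x) (1, 0)) s := by
    have hcurve : HasDerivAt (fun t : ℝ => (t, x)) ((1 : ℝ), (0 : Evec)) s :=
      (hasDerivAt_id s).prodMk (hasDerivAt_const s x)
    exact ((hg.differentiable (by norm_num) (s, x)).hasFDerivAt).comp_hasDerivAt s hcurve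
  exact h1.deriv

theorem gradu_eq (f : ℝ × Evec → ℝ) (hf : ContDiff ℝ 2 f)
    (hfpos : ∀ p, 0 < f p) (s : ℝ) (x : Evec) :
    gradu f s x = (InnerProductSpace.toDual ℝ Evec).symm
      ((fderiv ℝ (fun p => Real.log (f p)) (s, x)).comp
        (ContinuousLinearMap.inr ℝ ℝ Evec)) := by
  have hg : ContDiff ℝ 2 (fun p => Real.log (f p)) := hf.log (fun p => (hfpos p).ne')
  have h2 : HasFDerivAt (fun y : Evec => Real.log (f (s, y)))
      ((fderiv ℝ (fun p => Real.log (f p)) (s, x)).comp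
        (ContinuousLinearMap.inr ℝ ℝ Evec)) x :=
    ((hg.differentiable (by norm_num) (s, x)).hasFDerivAt).comp x
      (hasFDerivAt_prodMk_right s x)
  show (InnerProductSpace.toDual ℝ Evec).symm
      (fderiv ℝ (fun y => Real.log (f (s, y))) x) = _
  rw [h2.fderiv]

theorem VF_contDiff (f : ℝ × Evec → ℝ) (hf : ContDiff ℝ 2 f)
    (hfpos : ∀ p, 0 < f p) :
    ContDiff ℝ 1 (fun q : ℝ × (Evec × Evec) => VF f q.1 q.2) := by
  have hg : ContDiff ℝ 2 (fun p => Real.log (f p)) := hf.log (fun p => (hfpos p).ne')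
  have hG : ContDiff ℝ 1 (fderiv ℝ (fun p => Real.log (f p))) :=
    hg.fderiv_right (by norm_num)
  have hA : ContDiff ℝ 1 (fun p : ℝ × Evec => ut f p.1 p.2) := by
    have h : ContDiff ℝ 1 (fun p : ℝ × Evec =>
        fderiv ℝ (fun p => Real.log (f p)) p ((1 : ℝ), (0 : Evec))) :=
      hG.clm_apply contDiff_const
    have he : (fun p : ℝ × Evec => ut f p.1 p.2) = fun p =>
        fderiv ℝ (fun p => Real.log (f p)) p ((1 : ℝ), (0 : Evec)) :=
      funext fun p => ut_eq f hf hfpos p.1 p.2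
    rw [he]; exact h
  have hB : ContDiff ℝ 1 (fun p : ℝ × Evec => gradu f p.1 p.2) := by
    have h : ContDiff ℝ 1 (fun p : ℝ × Evec =>
        (InnerProductSpace.toDual ℝ Evec).symm
          ((fderiv ℝ (fun p => Real.log (f p)) p).comp
            (ContinuousLinearMap.inr ℝ ℝ Evec))) :=
      (InnerProductSpace.toDual ℝ Evec).symm.contDiff.comp (hG.clm_comp contDiff_const)
    have he : (fun p : ℝ × Evec => gradu f p.1 p.2) = fun p =>
        (InnerProductSpace.toDual ℝ Evec).symm
          ((fderiv ℝ (fun p => Real.log (f p)) p).comp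
            (ContinuousLinearMap.inr ℝ ℝ Evec)) :=
      funext fun p => gradu_eq f hf hfpos p.1 p.2
    rw [he]; exact h
  have hA' : ContDiff ℝ 1 (fun q : ℝ × (Evec × Evec) => ut f q.1 q.2.1) :=
    hA.comp (contDiff_fst.prodMk (contDiff_snd.fst))
  have hB' : ContDiff ℝ 1 (fun q : ℝ × (Evec × Evec) => gradu f q.1 q.2.1) :=
    hB.comp (contDiff_fst.prodMk (contDiff_snd.fst))
  have hw : ContDiff ℝ 1 (fun q : ℝ × (Evec × Evec) => q.2.2) := contDiff_snd.snd
  exact hw.prodMk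
    (((((contDiff_const (c := (2:ℝ))).mul (hA'.add (hB'.inner ℝ hw))).smul hw).neg).add
      ((hw.norm_sq ℝ).smul hB'))

structure OldPL {E : Type*} [NormedAddCommGroup E] (v : ℝ → E → E) (tMin t₀ tMax : ℝ)
    (x₀ : E) (L : NNReal) (R C : ℝ) : Prop where
  ht₀ : t₀ ∈ Icc tMin tMax
  hR : 0 ≤ R
  lipschitz : ∀ t ∈ Icc tMin tMax, LipschitzOnWith L (v t) (closedBall x₀ R)
  cont : ∀ x ∈ closedBall x₀ R, ContinuousOn (fun t : ℝ => v t x) (Icc tMin tMax)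
  norm_le : ∀ t ∈ Icc tMin tMax, ∀ x ∈ closedBall x₀ R, ‖v t x‖ ≤ C
  C_mul_le : C * max (tMax - t₀) (t₀ - tMin) ≤ R

open Metric in
theorem pl_exists_mem {E : Type*} [NormedAddCommGroup E] [NormedSpace ℝ E] [CompleteSpace E]
    {v : ℝ → E → E} {tMin t₀ tMax : ℝ} (x₀ : E) {C R : ℝ} {L : NNReal}
    (hpl : OldPL v tMin t₀ tMax x₀ L R C) :
    ∃ f : ℝ → E, f t₀ = x₀ ∧ (∀ t ∈ Icc tMin tMax, f t ∈ closedBall x₀ R) ∧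
      ∀ t ∈ Icc tMin tMax, HasDerivWithinAt f (v t (f t)) (Icc tMin tMax) t := by
  have hC0 : 0 ≤ C :=
    (norm_nonneg _).trans (hpl.norm_le t₀ hpl.ht₀ x₀ (mem_closedBall_self hpl.hR))
  have hmul := hpl.C_mul_le
  have hlip := hpl.lipschitz
  have hcont := hpl.cont
  have hnorm := hpl.norm_le
  have ht₀ := hpl.ht₀
  lift C to NNReal using hC0
  lift R to NNReal using hpl.hR
  have hP : IsPicardLindelof v (⟨t₀, ht₀⟩ : Icc tMin tMax) x₀ R 0 C L :=
    { lipschitzOnWith := hlip, continuousOn := hcont, norm_le := hnorm,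
      mul_max_le := by simpa using hmul }
  obtain ⟨α, hα⟩ := ODE.FunSpace.exists_isFixedPt_next hP (mem_closedBall_self le_rfl)
  refine ⟨α.compProj, ?_, fun t _ => α.compProj_mem_closedBall hP.mul_max_le, fun t ht => ?_⟩
  · show α.compProj ((⟨t₀, ht₀⟩ : Icc tMin tMax) : ℝ) = x₀
    rw [ODE.FunSpace.compProj_val, ← hα, ODE.FunSpace.next_apply₀]
  · apply ODE.hasDerivWithinAt_picard_Icc ht₀ hP.continuousOn_uncurry
      α.continuous_compProj.continuousOn
      (fun _ ht' => α.compProj_mem_closedBall hP.mul_max_le) x₀ ht |>.congr_of_mem _ ht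
    intro t' ht'
    nth_rw 1 [← hα]
    rw [ODE.FunSpace.compProj_of_mem ht', ODE.FunSpace.next_apply]

/-- a free-falling trajectory `σ : [0,b) → ℝⁿ`, `0 < b < ∞`, extends to a
free-falling trajectory on `[0,b]` iff there is a sequence `sₖ ↗ b` in `[0,b)` along which
`(σ(sₖ), σ'(sₖ))` converges in `ℝⁿ × ℝⁿ`. -/
theorem stmt4 {n : ℕ} (f : ℝ × EuclideanSpace ℝ (Fin n) → ℝ)
    (hf : ContDiff ℝ (⊤ : ℕ∞) f) (hfpos : ∀ p, 0 < f p)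
    (b : ℝ) (hb : 0 < b)
    (σ σ' : ℝ → EuclideanSpace ℝ (Fin n))
    (h : IsFreeFall f σ σ' (Set.Ico 0 b)) :
    (∃ τ τ' : ℝ → EuclideanSpace ℝ (Fin n),
        IsFreeFall f τ τ' (Set.Icc 0 b)
          ∧ Set.EqOn τ σ (Set.Ico 0 b) ∧ Set.EqOn τ' σ' (Set.Ico 0 b))
    ↔ ∃ s : ℕ → ℝ, (∀ k, s k ∈ Set.Ico 0 b) ∧ StrictMono s
        ∧ Filter.Tendsto s Filter.atTop (nhds b)
        ∧ ∃ p : EuclideanSpace ℝ (Fin n) × EuclideanSpace ℝ (Fin n),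
            Filter.Tendsto (fun k => (σ (s k), σ' (s k))) Filter.atTop (nhds p) := by
  constructor
  · rintro ⟨τ, τ', hτ, hτσ, hτσ'⟩
    have hst : Tendsto (fun k : ℕ => b - b / ((k : ℝ) + 2)) atTop (𝓝 b) := by
      have h2 : Tendsto (fun k : ℕ => ((k : ℝ) + 2)) atTop atTop :=
        tendsto_atTop_add_const_right _ 2 tendsto_natCast_atTop_atTop
      have h3 : Tendsto (fun k : ℕ => b / ((k : ℝ) + 2)) atTop (𝓝 0) :=
        Tendsto.div_atTop tendsto_const_nhds h2
      simpa using tendsto_const_nhds.sub h3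
    have hmem : ∀ k : ℕ, b - b / ((k : ℝ) + 2) ∈ Ico 0 b := by
      intro k
      have hk0 : (0:ℝ) ≤ (k:ℝ) := Nat.cast_nonneg k
      constructor
      · have : b / ((k:ℝ) + 2) ≤ b := div_le_self hb.le (by linarith)
        linarith
      · have : 0 < b / ((k:ℝ) + 2) := by positivity
        linarith
    refine ⟨fun k => b - b / ((k : ℝ) + 2), hmem, ?_, hst, (τ b, τ' b), ?_⟩
    · intro i j hij
      have hij' : (i:ℝ) + 2 < (j:ℝ) + 2 := by exact_mod_cast by simpa using hij
      have : b / ((j:ℝ) + 2) < b / ((i:ℝ) + 2) :=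
        div_lt_div_of_pos_left hb (by positivity) hij'
      simpa using sub_lt_sub_left this b
    · have hcτ : ContinuousAt τ b := (hτ.1 b ⟨hb.le, le_refl b⟩).continuousAt
      have hcτ' : ContinuousAt τ' b := (hτ.2 b ⟨hb.le, le_refl b⟩).continuousAt
      have h4 := (hcτ.tendsto.comp hst).prodMk_nhds (hcτ'.tendsto.comp hst)
      refine Tendsto.congr (fun k => ?_) h4
      have hm := hmem k
      simp only [Function.comp]
      rw [hτσ hm, hτσ' hm]
  · rintro ⟨s, hsmem, -, hstend, p₀, hptend⟩
    have hf2 : ContDiff ℝ 2 f := hf.of_le (WithTop.coe_le_coe.mpr le_top)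
    have hVC := VF_contDiff f hf2 hfpos
    have hVcont : Continuous (fun q : ℝ × (EuclideanSpace ℝ (Fin n) × EuclideanSpace ℝ (Fin n)) => VF f q.1 q.2) := hVC.continuous
    set Y : ℝ → EuclideanSpace ℝ (Fin n) × EuclideanSpace ℝ (Fin n) := fun t => (σ t, σ' t) with hYdef
    have hY : ∀ t ∈ Ico 0 b, HasDerivAt Y (VF f t (Y t)) t :=
      fun t ht => (h.1 t ht).prodMk (h.2 t ht)
    -- compactness and bounds
    have hKcomp : IsCompact (Icc (b-1) (b+1) ×ˢ closedBall p₀ 2) :=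
      isCompact_Icc.prod (isCompact_closedBall _ _)
    have hKconv : Convex ℝ (Icc (b-1) (b+1) ×ˢ closedBall p₀ 2) :=
      (convex_Icc _ _).prod (convex_closedBall _ _)
    obtain ⟨M, hM⟩ := hKcomp.exists_bound_of_continuousOn
      ((hVC.continuous_fderiv one_ne_zero).continuousOn
        (s := Icc (b-1) (b+1) ×ˢ closedBall p₀ 2))
    set L : NNReal := ⟨max M 0, le_max_right M 0⟩ with hLdef
    have hLip : LipschitzOnWith L (fun q : ℝ × (EuclideanSpace ℝ (Fin n) × EuclideanSpace ℝ (Fin n)) => VF f q.1 q.2)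
        (Icc (b-1) (b+1) ×ˢ closedBall p₀ 2) := by
      apply Convex.lipschitzOnWith_of_nnnorm_hasFDerivWithin_le
        (f' := fderiv ℝ (fun q : ℝ × (EuclideanSpace ℝ (Fin n) × EuclideanSpace ℝ (Fin n)) => VF f q.1 q.2))
        (fun q hq => ((hVC.differentiable one_ne_zero) q).hasFDerivAt.hasFDerivWithinAt)
        (fun q hq => ?_) hKconv
      have hMq := hM q hq
      have hcoe : (L : ℝ) = max M 0 := rfl
      rw [← NNReal.coe_le_coe, coe_nnnorm, hcoe]
      exact le_max_of_le_left hMq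
    have hslice : ∀ t ∈ Icc (b-1) (b+1),
        LipschitzOnWith L (VF f t) (closedBall p₀ 2) := by
      intro t ht x hx y hy
      have h1 := hLip (Set.mk_mem_prod ht hx) (Set.mk_mem_prod ht hy)
      have h2 : edist ((t, x) : ℝ × (EuclideanSpace ℝ (Fin n) × EuclideanSpace ℝ (Fin n))) (t, y) = edist x y := by
        rw [Prod.edist_eq, edist_self]
        exact max_eq_right zero_le
      calc edist (VF f t x) (VF f t y) ≤ L * edist ((t,x) : ℝ × (EuclideanSpace ℝ (Fin n) × EuclideanSpace ℝ (Fin n))) (t,y) := h1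
        _ = L * edist x y := by rw [h2]
    obtain ⟨C, hC⟩ := hKcomp.exists_bound_of_continuousOn hVcont.continuousOn
    set Cm := max C 1 with hCmdef
    have hCm0 : (0:ℝ) < Cm := lt_of_lt_of_le one_pos (le_max_right _ _)
    set ε := min (1/2) (1 / (2 * Cm)) with hεdef
    have hε0 : 0 < ε := lt_min (by norm_num) (by positivity)
    have hεhalf : ε ≤ 1/2 := min_le_left _ _
    have hεC : Cm * ε ≤ 1/2 := by
      have h5 : ε ≤ 1/(2*Cm) := min_le_right _ _
      have h6 : Cm * ε ≤ Cm * (1/(2*Cm)) := mul_le_mul_of_nonneg_left h5 hCm0.le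
      have h7 : Cm * (1/(2*Cm)) = 1/2 := by
        rw [mul_one_div, div_eq_div_iff (by positivity) (by norm_num)]
        ring
      linarith
    -- pick k
    have hev1 : ∀ᶠ k in atTop, b - ε < s k :=
      hstend.eventually (eventually_gt_nhds (by linarith))
    have hev2 : ∀ᶠ k in atTop, (σ (s k), σ' (s k)) ∈ closedBall p₀ (1/2) :=
      hptend.eventually (eventually_of_mem (Metric.closedBall_mem_nhds p₀ (by norm_num))
        (fun y hy => hy))
    obtain ⟨k, hk1, hk2⟩ := (hev1.and hev2).exists
    set t₀ := s k with ht₀def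
    have ht₀mem : t₀ ∈ Ico 0 b := hsmem k
    have hbt : b - t₀ < ε := by linarith
    have hYt₀ : Y t₀ ∈ closedBall p₀ (1/2) := hk2
    have hdYp : dist (Y t₀) p₀ ≤ 1/2 := mem_closedBall.mp hYt₀
    have hsubI : Icc (t₀ - ε) (t₀ + ε) ⊆ Icc (b-1) (b+1) :=
      Icc_subset_Icc (by linarith) (by linarith [ht₀mem.2])
    have hballsub : closedBall (Y t₀) (1/2) ⊆ closedBall p₀ 2 := by
      apply closedBall_subset_closedBall'
      linarith
    have hpl : OldPL (VF f) (t₀ - ε) t₀ (t₀ + ε) (Y t₀) L (1/2) C := by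
      refine ⟨⟨by linarith, by linarith⟩, by norm_num, ?_, ?_, ?_, ?_⟩
      · intro t ht
        exact (hslice t (hsubI ht)).mono hballsub
      · intro x hx
        exact (hVcont.comp (continuous_id.prodMk continuous_const)).continuousOn
      · intro t ht x hx
        exact hC (t, x) (Set.mk_mem_prod (hsubI ht) (hballsub hx))
      · have h8 : max (t₀ + ε - t₀) (t₀ - (t₀ - ε)) = ε := by
          rw [add_sub_cancel_left, sub_sub_cancel, max_self]
        rw [h8]
        have h9 : C * ε ≤ Cm * ε := mul_le_mul_of_nonneg_right (le_max_left _ _) hε0.le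
        linarith
    obtain ⟨ψ, hψ0, hψmem, hψd⟩ := pl_exists_mem (Y t₀) hpl
    have hψball : ∀ t ∈ Icc (t₀ - ε) (t₀ + ε), ψ t ∈ closedBall p₀ 1 := by
      intro t ht
      have h10 : dist (ψ t) (Y t₀) ≤ 1/2 := mem_closedBall.mp (hψmem t ht)
      have := dist_triangle (ψ t) (Y t₀) p₀
      exact mem_closedBall.mpr (by linarith)
    -- uniqueness machinery
    have hsv : ∀ t : ℝ, LipschitzOnWith L (VF f t)
        (if t ∈ Icc (b-1) (b+1) then closedBall p₀ 2 else (∅ : Set (EuclideanSpace ℝ (Fin n) × EuclideanSpace ℝ (Fin n)))) := by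
      intro t
      by_cases hmem : t ∈ Icc (b-1) (b+1)
      · rw [if_pos hmem]; exact hslice t hmem
      · rw [if_neg hmem]; exact lipschitzOnWith_empty L (VF f t)
    have main : ∀ r ∈ Ico t₀ b, (∀ t ∈ Icc t₀ r, Y t ∈ closedBall p₀ 2) →
        EqOn Y ψ (Icc t₀ r) := by
      intro r hr hmemb
      have hsub2 : Icc t₀ r ⊆ Ico 0 b :=
        fun t ht => ⟨le_trans ht₀mem.1 ht.1, lt_of_le_of_lt ht.2 hr.2⟩
      have hsub3 : Icc t₀ r ⊆ Icc (t₀ - ε) (t₀ + ε) :=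
        Icc_subset_Icc (by linarith) (by linarith [hr.2])
      refine ODE_solution_unique_of_mem_Icc_right (fun t _ => hsv t) ?_ ?_ ?_ ?_ ?_ ?_ ?_
      · exact fun t ht => ((hY t (hsub2 ht)).continuousAt).continuousWithinAt
      · exact fun t ht => (hY t (hsub2 (Ico_subset_Icc_self ht))).hasDerivWithinAt
      · intro t ht
        rw [if_pos (hsubI (hsub3 (Ico_subset_Icc_self ht)))]
        exact hmemb t (Ico_subset_Icc_self ht)
      · exact fun t ht => ((hψd t (hsub3 ht)).continuousWithinAt).mono hsub3
      · intro t ht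
        have h11 : HasDerivAt ψ (VF f t (ψ t)) t :=
          (hψd t (hsub3 (Ico_subset_Icc_self ht))).hasDerivAt
            (Icc_mem_nhds (by linarith [ht.1]) (by linarith [ht.2, hr.2]))
        exact h11.hasDerivWithinAt
      · intro t ht
        rw [if_pos (hsubI (hsub3 (Ico_subset_Icc_self ht)))]
        exact closedBall_subset_closedBall (by norm_num)
          (hψball t (hsub3 (Ico_subset_Icc_self ht)))
      · exact hψ0.symm
    -- no escape
    have good : ∀ t ∈ Ico t₀ b, Y t ∈ closedBall p₀ 2 := by
      by_contra hbad
      push_neg at hbad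
      obtain ⟨w, hw, hwout⟩ := hbad
      set Bad := {t | t ∈ Ico t₀ b ∧ Y t ∉ closedBall p₀ 2} with hBaddef
      have hBadne : Bad.Nonempty := ⟨w, hw, hwout⟩
      have hBadbdd : BddBelow Bad := ⟨t₀, fun t ht => ht.1.1⟩
      set t₁ := sInf Bad with ht₁def
      have ht₁lb : t₀ ≤ t₁ := le_csInf hBadne (fun t ht => ht.1.1)
      have ht₁ub : t₁ < b := lt_of_le_of_lt (csInf_le hBadbdd ⟨hw, hwout⟩) hw.2
      have hgood1 : ∀ t ∈ Ico t₀ t₁, Y t ∈ closedBall p₀ 2 := by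
        intro t ht
        by_contra hout
        exact absurd (csInf_le hBadbdd ⟨⟨ht.1, lt_trans ht.2 ht₁ub⟩, hout⟩) (not_le.mpr ht.2)
      have ht₁Ico : t₁ ∈ Ico 0 b := ⟨le_trans ht₀mem.1 ht₁lb, ht₁ub⟩
      have hYt₁ : Y t₁ ∈ closedBall p₀ 2 := by
        rcases eq_or_lt_of_le ht₁lb with heq | hlt
        · rw [← heq]
          exact closedBall_subset_closedBall (by norm_num) hYt₀
        · have hcont : ContinuousAt Y t₁ := (hY t₁ ht₁Ico).continuousAt
          have htend : Tendsto Y (𝓝[<] t₁) (𝓝 (Y t₁)) := hcont.continuousWithinAt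
          refine Metric.isClosed_closedBall.mem_of_tendsto htend ?_
          filter_upwards [Ico_mem_nhdsLT hlt] with x hx
          exact hgood1 x hx
      have hEq1 := main t₁ ⟨ht₁lb, ht₁ub⟩ (fun t ht => by
        rcases eq_or_lt_of_le ht.2 with heq | hlt'
        · rw [heq]; exact hYt₁
        · exact hgood1 t ⟨ht.1, hlt'⟩)
      have hψt₁ : Y t₁ ∈ closedBall p₀ 1 := by
        rw [hEq1 (right_mem_Icc.mpr ht₁lb)]
        exact hψball t₁ ⟨by linarith, by linarith⟩
      have hcont : ContinuousAt Y t₁ := (hY t₁ ht₁Ico).continuousAt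
      have hev : ∀ᶠ t in 𝓝 t₁, Y t ∈ closedBall p₀ 2 := by
        apply hcont.eventually_mem
        have : Y t₁ ∈ Metric.ball p₀ 2 :=
          mem_ball.mpr (lt_of_le_of_lt (mem_closedBall.mp hψt₁) one_lt_two)
        exact mem_nhds_iff.mpr ⟨Metric.ball p₀ 2, Metric.ball_subset_closedBall,
          Metric.isOpen_ball, this⟩
      obtain ⟨δ, hδ0, hδ⟩ := Metric.eventually_nhds_iff.mp hev
      obtain ⟨w', hw'B, hw'lt⟩ := exists_lt_of_csInf_lt hBadne
        (show sInf Bad < t₁ + δ by rw [← ht₁def]; linarith)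
      have hw'ge : t₁ ≤ w' := csInf_le hBadbdd hw'B
      exact hw'B.2 (hδ (show dist w' t₁ < δ by
        rw [Real.dist_eq, abs_of_nonneg (by linarith)]
        linarith))
    have hEqfull : ∀ t ∈ Ico t₀ b, Y t = ψ t := by
      intro t ht
      exact main t ht (fun r hr => good r ⟨hr.1, lt_of_le_of_lt hr.2 ht.2⟩)
        (right_mem_Icc.mpr ht.1)
    have hballb : b ∈ Icc (t₀ - ε) (t₀ + ε) := ⟨by linarith [ht₀mem.2], by linarith⟩
    have hψb : HasDerivAt ψ (VF f b (ψ b)) b :=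
      (hψd b hballb).hasDerivAt (Icc_mem_nhds (by linarith [ht₀mem.2]) (by linarith))
    have hψb1 : HasDerivAt (fun x => (ψ x).1) (VF f b (ψ b)).1 b :=
      ((ContinuousLinearMap.fst ℝ (EuclideanSpace ℝ (Fin n))
        (EuclideanSpace ℝ (Fin n))).hasFDerivAt).comp_hasDerivAt b hψb
    have hψb2 : HasDerivAt (fun x => (ψ x).2) (VF f b (ψ b)).2 b :=
      ((ContinuousLinearMap.snd ℝ (EuclideanSpace ℝ (Fin n))
        (EuclideanSpace ℝ (Fin n))).hasFDerivAt).comp_hasDerivAt b hψb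
    have hIoo : Ioo t₀ (t₀ + ε) ∈ 𝓝 b := Ioo_mem_nhds ht₀mem.2 (by linarith)
    have hevb1 : (fun x => if x < b then σ x else (ψ x).1) =ᶠ[𝓝 b] (fun x => (ψ x).1) := by
      filter_upwards [hIoo] with x hx
      by_cases hxb : x < b
      · rw [if_pos hxb]
        exact congrArg Prod.fst (hEqfull x ⟨hx.1.le, hxb⟩)
      · rw [if_neg hxb]
    have hevb2 : (fun x => if x < b then σ' x else (ψ x).2) =ᶠ[𝓝 b] (fun x => (ψ x).2) := by
      filter_upwards [hIoo] with x hx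
      by_cases hxb : x < b
      · rw [if_pos hxb]
        exact congrArg Prod.snd (hEqfull x ⟨hx.1.le, hxb⟩)
      · rw [if_neg hxb]
    refine ⟨fun t => if t < b then σ t else (ψ t).1,
      fun t => if t < b then σ' t else (ψ t).2, ⟨?_, ?_⟩, ?_, ?_⟩
    · intro t ht
      rcases lt_or_eq_of_le ht.2 with hlt | heq
      · have hmem' : t ∈ Ico 0 b := ⟨ht.1, hlt⟩
        have hevσ : (fun x => if x < b then σ x else (ψ x).1) =ᶠ[𝓝 t] σ := by
          filter_upwards [Iio_mem_nhds hlt] with x hx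
          rw [if_pos (show x < b from hx)]
        have h12 := (h.1 t hmem').congr_of_eventuallyEq hevσ
        simpa [if_pos hlt] using h12
      · subst heq
        have h13 := hψb1.congr_of_eventuallyEq hevb1
        simpa [lt_irrefl, VF] using h13
    · intro t ht
      rcases lt_or_eq_of_le ht.2 with hlt | heq
      · have hmem' : t ∈ Ico 0 b := ⟨ht.1, hlt⟩
        have hevσ' : (fun x => if x < b then σ' x else (ψ x).2) =ᶠ[𝓝 t] σ' := by
          filter_upwards [Iio_mem_nhds hlt] with x hx
          rw [if_pos (show x < b from hx)]
        have h14 := (h.2 t hmem').congr_of_eventuallyEq hevσ'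
        simp only [if_pos hlt]
        exact h14
      · subst heq
        have h15 := hψb2.congr_of_eventuallyEq hevb2
        simp only [lt_irrefl, if_neg (lt_irrefl _), if_false]
        simpa [VF] using h15
    · intro t ht
      simp [ht.2]
    · intro t ht
      simp [ht.2]
end

section
/- Let f : ℝ × ℝ → ℝ be a smooth positive function, u := log f, and let σ : J → ℝ (J an interval containing 0) be a C² curve satisfying the one-dimensional free-falling equation σ''(s) + 2·(∂ₜf/f)(s,σ(s))·σ'(s) + (∂ₓf/f)(s,σ(s))·σ'(s)² = 0 for all s ∈ J. Then for all s ∈ J, σ'(s) = (C / f(s,σ(s))) · exp(−∫₀ˢ ∂ₜu(r,σ(r)) dr), where C = f(0,σ(0))·σ'(0). -/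
open Real Set Filter Topology

/-- `∂ₜ u (s,x)` where `u = log f`, for `f : ℝ × ℝ → ℝ`. -/
noncomputable def ut1 (f : ℝ × ℝ → ℝ) (s x : ℝ) : ℝ :=
  deriv (fun t : ℝ => Real.log (f (t, x))) s

/-- `∂ₜ f (s,x)`. -/
noncomputable def ft1 (f : ℝ × ℝ → ℝ) (s x : ℝ) : ℝ :=
  deriv (fun t : ℝ => f (t, x)) s

/-- `∂ₓ f (s,x)`. -/
noncomputable def fx1 (f : ℝ × ℝ → ℝ) (s x : ℝ) : ℝ :=
  deriv (fun y : ℝ => f (s, y)) x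

/-- a solution of the one-dimensional free-falling equation
`σ'' + 2(f_t/f)(s,σ)·σ' + (f_x/f)(s,σ)·σ'² = 0` satisfies
`σ'(s) = (C / f(s,σ(s)))·exp(−∫₀ˢ ∂ₜu(r,σ(r)) dr)` with `C = f(0,σ(0))·σ'(0)`. -/
theorem stmt10 (f : ℝ × ℝ → ℝ) (hf : ContDiff ℝ (⊤ : ℕ∞) f) (hfpos : ∀ p, 0 < f p)
    (J : Set ℝ) (hJ : Convex ℝ J) (h0 : (0 : ℝ) ∈ J)
    (σ σ' : ℝ → ℝ)
    (hσ : ∀ s ∈ J, HasDerivAt σ (σ' s) s)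
    (heq : ∀ s ∈ J, HasDerivAt σ'
      (-(2 * (ft1 f s (σ s) / f (s, σ s)) * σ' s
          + (fx1 f s (σ s) / f (s, σ s)) * (σ' s) ^ 2)) s) :
    ∀ s ∈ J, σ' s = (f (0, σ 0) * σ' 0) / f (s, σ s)
        * Real.exp (-∫ r in (0:ℝ)..s, ut1 f r (σ r)) := by
  have hfd : Differentiable ℝ f := hf.differentiable (by simp)
  have hft : ∀ s x : ℝ, HasDerivAt (fun t : ℝ => f (t, x))
      (fderiv ℝ f (s, x) (1, 0)) s := by
    intro s x
    have hc : HasDerivAt (fun t : ℝ => ((t, x) : ℝ × ℝ)) ((1 : ℝ), (0 : ℝ)) s :=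
      (hasDerivAt_id s).prodMk (hasDerivAt_const s x)
    exact ((hfd (s, x)).hasFDerivAt).comp_hasDerivAt s hc
  have hfx : ∀ s x : ℝ, HasDerivAt (fun y : ℝ => f (s, y))
      (fderiv ℝ f (s, x) (0, 1)) x := by
    intro s x
    have hc : HasDerivAt (fun y : ℝ => ((s, y) : ℝ × ℝ)) ((0 : ℝ), (1 : ℝ)) x :=
      (hasDerivAt_const x s).prodMk (hasDerivAt_id x)
    exact ((hfd (s, x)).hasFDerivAt).comp_hasDerivAt x hc
  have hft1 : ∀ s x : ℝ, ft1 f s x = fderiv ℝ f (s, x) (1, 0) :=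
    fun s x => (hft s x).deriv
  have hfx1 : ∀ s x : ℝ, fx1 f s x = fderiv ℝ f (s, x) (0, 1) :=
    fun s x => (hfx s x).deriv
  have hut1 : ∀ s x : ℝ, ut1 f s x = fderiv ℝ f (s, x) (1, 0) / f (s, x) :=
    fun s x => ((hft s x).log (hfpos (s, x)).ne').deriv
  intro s hs
  set a := min 0 s with ha
  set b := max 0 s with hb
  have hab : a ≤ b := min_le_max
  have hKuIcc : Set.uIcc (0 : ℝ) s = Set.Icc a b := rfl
  have hKJ : Set.Icc a b ⊆ J := by
    rw [← hKuIcc]; exact hJ.ordConnected.uIcc_subset h0 hs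
  have h0K : (0 : ℝ) ∈ Set.Icc a b := ⟨min_le_left _ _, le_max_left _ _⟩
  have hsK : s ∈ Set.Icc a b := ⟨min_le_right _ _, le_max_right _ _⟩
  -- clamped version of σ, continuous on all of ℝ
  set c : ℝ → ℝ := fun r => max a (min r b) with hc
  have hcK : ∀ r, c r ∈ Set.Icc a b :=
    fun r => ⟨le_max_left _ _, max_le hab (min_le_right _ _)⟩
  have hceq : ∀ x ∈ Set.Icc a b, c x = x := by
    intro x hx
    simp only [hc, min_eq_left hx.2, max_eq_right hx.1]
  have hccont : Continuous c :=
    continuous_const.max (continuous_id.min continuous_const)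
  have hσc : Continuous fun r => σ (c r) := by
    rw [continuous_iff_continuousAt]
    intro r
    exact ((hσ (c r) (hKJ (hcK r))).continuousAt).comp hccont.continuousAt
  -- the nice integrand
  set W : ℝ → ℝ := fun r => fderiv ℝ f (r, σ (c r)) (1, 0) / f (r, σ (c r)) with hW
  have hWcont : Continuous W := by
    have h1 : Continuous fun r : ℝ => ((r, σ (c r)) : ℝ × ℝ) :=
      continuous_id.prodMk hσc
    have h2 : Continuous fun p : ℝ × ℝ => fderiv ℝ f p (1, 0) :=
      (hf.continuous_fderiv (by simp)).clm_apply continuous_const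
    exact (h2.comp h1).div (hf.continuous.comp h1) fun r => (hfpos _).ne'
  have hWint : ∀ x : ℝ, HasDerivAt (fun u => ∫ r in (0:ℝ)..u, W r) (W x) x := by
    intro x
    exact intervalIntegral.integral_hasDerivAt_right
      (hWcont.intervalIntegrable _ _)
      hWcont.aestronglyMeasurable.stronglyMeasurableAtFilter
      hWcont.continuousAt
  -- the conserved quantity
  set g : ℝ → ℝ :=
    fun x => f (x, σ x) * σ' x * Real.exp (∫ r in (0:ℝ)..x, W r) with hg
  have hgderiv : ∀ x ∈ Set.Icc a b, HasDerivAt g 0 x := by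
    intro x hx
    have hxJ : x ∈ J := hKJ hx
    have hA : HasDerivAt (fun y => f (y, σ y))
        (fderiv ℝ f (x, σ x) (1, σ' x)) x := by
      have hcurve : HasDerivAt (fun y : ℝ => ((y, σ y) : ℝ × ℝ))
          ((1 : ℝ), σ' x) x := (hasDerivAt_id x).prodMk (hσ x hxJ)
      exact ((hfd (x, σ x)).hasFDerivAt).comp_hasDerivAt x hcurve
    have hE : HasDerivAt (fun u => Real.exp (∫ r in (0:ℝ)..u, W r))
        (Real.exp (∫ r in (0:ℝ)..x, W r) * W x) x := (hWint x).exp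
    have hprod := ((hA.mul (heq x hxJ)).mul hE)
    have hsplit : fderiv ℝ f (x, σ x) (1, σ' x)
        = fderiv ℝ f (x, σ x) (1, 0) + σ' x * fderiv ℝ f (x, σ x) (0, 1) := by
      have : ((1 : ℝ), σ' x) = ((1 : ℝ), (0 : ℝ)) + σ' x • ((0 : ℝ), (1 : ℝ)) := by
        simp [Prod.ext_iff]
      rw [this, map_add, map_smul]; simp [smul_eq_mul]
    have hWx : W x = fderiv ℝ f (x, σ x) (1, 0) / f (x, σ x) := by
      simp only [hW, hceq x hx]
    refine hprod.congr_deriv ?_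
    simp only [Pi.mul_apply]
    rw [hsplit, hWx, hft1, hfx1]
    have hne : f (x, σ x) ≠ 0 := (hfpos _).ne'
    field_simp
    ring
  have hkey : g s = g 0 := by
    have hmvt := (convex_Icc a b).norm_image_sub_le_of_norm_hasDerivWithin_le
      (f := g) (f' := fun _ => 0) (C := 0)
      (fun x hx => (hgderiv x hx).hasDerivWithinAt)
      (fun x _ => by simp) h0K hsK
    have : ‖g s - g 0‖ ≤ 0 := by simpa using hmvt
    have := le_antisymm this (norm_nonneg _)
    rwa [norm_eq_zero, sub_eq_zero] at this
  have hint_eq : (∫ r in (0:ℝ)..s, ut1 f r (σ r)) = ∫ r in (0:ℝ)..s, W r := by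
    apply intervalIntegral.integral_congr
    intro r hr
    rw [hKuIcc] at hr
    simp only [hW, hceq r hr, hut1]
  rw [hint_eq]
  have hg0 : g 0 = f (0, σ 0) * σ' 0 := by
    simp [hg, intervalIntegral.integral_same]
  have hgs : f (s, σ s) * σ' s * Real.exp (∫ r in (0:ℝ)..s, W r)
      = f (0, σ 0) * σ' 0 := by rw [← hg0, ← hkey]
  have hfs : f (s, σ s) ≠ 0 := (hfpos _).ne'
  have hEne : Real.exp (∫ r in (0:ℝ)..s, W r) ≠ 0 := Real.exp_ne_zero _
  rw [Real.exp_neg]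
  field_simp
  linear_combination hgs
end

section
/- Let f : ℝ → ℝ be given by f(x) = 1/(1+x²), and let C, D ∈ ℝ with C ≠ 0. Then σ(s) := tan(C·s + D), defined on the interval I = { s ∈ ℝ : C·s + D ∈ (−π/2, π/2) }, satisfies the time-independent free-falling equation σ''(s) + (f'(σ(s))/f(σ(s)))·σ'(s)² = 0, i.e. σ''(s) = (2σ(s)/(1+σ(s)²))·σ'(s)², for all s ∈ I; moreover I is a bounded interval (of length π/|C|), |σ(s)| → ∞ and |σ'(s)| → ∞ as s approaches either endpoint of I, and σ admits no extension to a C² solution on any strictly larger interval. Hence this free-falling observer is incomplete. -/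
open Real Set Filter Topology

private lemma abs_tan_top : Tendsto (fun u => |Real.tan u|) (𝓝[<] (π/2)) atTop :=
  tendsto_abs_atTop_atTop.comp Real.tendsto_tan_pi_div_two

private lemma abs_tan_bot : Tendsto (fun u => |Real.tan u|) (𝓝[>] (-(π/2))) atTop :=
  tendsto_abs_atBot_atTop.comp Real.tendsto_tan_neg_pi_div_two

private lemma tend_aff (C D a : ℝ) (s t : Set ℝ) (hs : ∀ x ∈ s, C*x+D ∈ t) :
    Tendsto (fun x => C*x+D) (𝓝[s] a) (𝓝[t] (C*a+D)) := by
  apply tendsto_nhdsWithin_of_tendsto_nhds_of_eventually_within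
  · exact (((continuous_const.mul continuous_id).add continuous_const).tendsto a).mono_left
      nhdsWithin_le_nhds
  · filter_upwards [self_mem_nhdsWithin] with x hx using hs x hx

private lemma poly_top (c : ℝ) (hc : 0 < c) :
    Tendsto (fun t : ℝ => c * (1 + t ^ 2)) atTop atTop := by
  apply Tendsto.const_mul_atTop hc
  exact tendsto_atTop_add_const_left _ 1 (tendsto_pow_atTop two_ne_zero)

/-- for `f(x) = 1/(1+x²)` and `C ≠ 0`, the curve `σ(s) = tan(Cs+D)` on
`I = {s : Cs+D ∈ (−π/2, π/2)}` is a (maximal, incomplete) free-falling observer: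
it solves `σ'' = (2σ/(1+σ²))·σ'²` (i.e. `σ'' + (f'(σ)/f(σ))·σ'² = 0`) on `I`; `I` is a
bounded open interval of length `π/|C|`; `|σ|` and `|σ'|` blow up at both endpoints; and
`σ` admits no extension to a C² solution on any strictly larger interval. -/
theorem stmt12 (C D : ℝ) (hC : C ≠ 0)
    (f : ℝ → ℝ) (hfdef : f = fun x => 1 / (1 + x ^ 2))
    (σ : ℝ → ℝ) (hσdef : σ = fun s => Real.tan (C * s + D))
    (I : Set ℝ) (hIdef : I = {s : ℝ | C * s + D ∈ Set.Ioo (-(π / 2)) (π / 2)}) :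
    (∀ s ∈ I, DifferentiableAt ℝ σ s)
    ∧ (∀ s ∈ I, HasDerivAt (deriv σ) ((2 * σ s / (1 + σ s ^ 2)) * (deriv σ s) ^ 2) s)
    ∧ (∀ s ∈ I, 2 * σ s / (1 + σ s ^ 2) = -(deriv f (σ s) / f (σ s)))
    ∧ (∃ a b : ℝ, a < b ∧ I = Set.Ioo a b ∧ b - a = π / |C|
        ∧ Filter.Tendsto (fun s => |σ s|) (nhdsWithin a (Set.Ioi a)) Filter.atTop
        ∧ Filter.Tendsto (fun s => |σ s|) (nhdsWithin b (Set.Iio b)) Filter.atTop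
        ∧ Filter.Tendsto (fun s => |deriv σ s|) (nhdsWithin a (Set.Ioi a)) Filter.atTop
        ∧ Filter.Tendsto (fun s => |deriv σ s|) (nhdsWithin b (Set.Iio b)) Filter.atTop)
    ∧ ¬ ∃ (J : Set ℝ) (τ : ℝ → ℝ), Convex ℝ J ∧ I ⊂ J ∧ Set.EqOn τ σ I
        ∧ (∀ s ∈ J, DifferentiableAt ℝ τ s)
        ∧ (∀ s ∈ J, HasDerivAt (deriv τ)
            ((2 * τ s / (1 + τ s ^ 2)) * (deriv τ s) ^ 2) s) := by
  have hpi : 0 < π := Real.pi_pos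
  have hmem : ∀ s ∈ I, C * s + D ∈ Ioo (-(π/2)) (π/2) := by
    intro s hs; rw [hIdef] at hs; exact hs
  have hcos : ∀ s ∈ I, Real.cos (C*s+D) ≠ 0 := fun s hs =>
    (Real.cos_pos_of_mem_Ioo (hmem s hs)).ne'
  have haff : ∀ s : ℝ, HasDerivAt (fun x => C*x+D) C s := by
    intro s
    simpa using ((hasDerivAt_id s).const_mul C).add_const D
  have hσder : ∀ s ∈ I, HasDerivAt σ (C / Real.cos (C*s+D)^2) s := by
    intro s hs
    rw [hσdef]
    have : HasDerivAt (fun x => Real.tan (C*x+D)) (1 / Real.cos (C*s+D)^2 * C) s :=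
      by have := HasDerivAt.comp (𝕜 := ℝ) s (Real.hasDerivAt_tan (hcos s hs)) (haff s); exact this
    convert this using 1
    ring
  have hdiff : ∀ s ∈ I, DifferentiableAt ℝ σ s := fun s hs =>
    (hσder s hs).differentiableAt
  have hderiv_eq : ∀ s ∈ I, deriv σ s = C / Real.cos (C*s+D)^2 := fun s hs =>
    (hσder s hs).deriv
  have hIopen : IsOpen I := by
    rw [hIdef]
    exact isOpen_Ioo.preimage ((continuous_const.mul continuous_id).add continuous_const)
  have hone : ∀ s ∈ I, 1 + σ s ^ 2 = 1 / Real.cos (C*s+D)^2 := by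
    intro s hs
    have hc := hcos s hs
    simp only [hσdef, Real.tan_eq_sin_div_cos]
    field_simp
    linarith [Real.sin_sq_add_cos_sq (C*s+D)]
  have hderiv_eq' : ∀ s ∈ I, deriv σ s = C * (1 + σ s ^ 2) := by
    intro s hs
    rw [hderiv_eq s hs, hone s hs]; ring
  -- second derivative
  have hsecond : ∀ s ∈ I, HasDerivAt (deriv σ)
      ((2 * σ s / (1 + σ s ^ 2)) * (deriv σ s) ^ 2) s := by
    intro s hs
    have hc := hcos s hs
    have hg : HasDerivAt (fun t => C / Real.cos (C*t+D)^2)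
        (C * (-(2 * Real.cos (C*s+D) ^ 1 * (-Real.sin (C*s+D) * C)) /
          (Real.cos (C*s+D)^2)^2)) s := by
      have h1 : HasDerivAt (fun t => Real.cos (C*t+D)) (-Real.sin (C*s+D) * C) s :=
        by have := HasDerivAt.comp (𝕜 := ℝ) s (Real.hasDerivAt_cos (C*s+D)) (haff s); exact this
      have h2 := (h1.pow 2).inv (pow_ne_zero 2 hc)
      simpa [div_eq_mul_inv, mul_comm, mul_assoc, mul_left_comm] using h2.const_mul C
    have heq : deriv σ =ᶠ[𝓝 s] (fun t => C / Real.cos (C*t+D)^2) := by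
      filter_upwards [hIopen.mem_nhds hs] with t ht using hderiv_eq t ht
    have hval : C * (-(2 * Real.cos (C*s+D) ^ 1 * (-Real.sin (C*s+D) * C)) /
          (Real.cos (C*s+D)^2)^2)
        = (2 * σ s / (1 + σ s ^ 2)) * (deriv σ s) ^ 2 := by
      rw [hderiv_eq s hs, hone s hs]
      simp only [hσdef, Real.tan_eq_sin_div_cos]
      field_simp
    rw [← hval]
    exact hg.congr_of_eventuallyEq heq
  -- part 3
  have hpart3 : ∀ s ∈ I, 2 * σ s / (1 + σ s ^ 2) = -(deriv f (σ s) / f (σ s)) := by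
    intro s hs
    set x := σ s with hx
    have hx2 : (0:ℝ) < 1 + x ^ 2 := by positivity
    have hf' : HasDerivAt f (-(2 * x) / (1 + x^2)^2) x := by
      rw [hfdef]
      have h1 : HasDerivAt (fun y : ℝ => 1 + y ^ 2) (2 * x) x := by
        simpa using ((hasDerivAt_pow 2 x).const_add 1)
      have := h1.inv hx2.ne'
      simp only [one_div]
      exact this
    rw [hf'.deriv, hfdef]
    simp only
    field_simp
  -- derivative blow-up from |σ| blow-up
  have hblow : ∀ l : Filter ℝ, (∀ᶠ s in l, s ∈ I) →
      Tendsto (fun s => |σ s|) l atTop → Tendsto (fun s => |deriv σ s|) l atTop := by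
    intro l hev hσt
    have h1 : Tendsto (fun s => |C| * (1 + |σ s| ^ 2)) l atTop :=
      (poly_top |C| (abs_pos.mpr hC)).comp hσt
    apply h1.congr'
    filter_upwards [hev] with s hs
    rw [hderiv_eq' s hs, abs_mul, abs_of_pos (show (0:ℝ) < 1 + σ s ^ 2 by positivity), sq_abs]
  -- part 4
  have hpart4 : ∃ a b : ℝ, a < b ∧ I = Set.Ioo a b ∧ b - a = π / |C|
      ∧ Tendsto (fun s => |σ s|) (𝓝[>] a) atTop
      ∧ Tendsto (fun s => |σ s|) (𝓝[<] b) atTop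
      ∧ Tendsto (fun s => |deriv σ s|) (𝓝[>] a) atTop
      ∧ Tendsto (fun s => |deriv σ s|) (𝓝[<] b) atTop := by
    rcases hC.lt_or_gt with hCneg | hCpos
    · -- C < 0
      set a := (π/2 - D)/C with hadef
      set b := (-(π/2) - D)/C with hbdef
      have ha : C * a = π/2 - D := by rw [hadef]; field_simp
      have hb : C * b = -(π/2) - D := by rw [hbdef]; field_simp
      have hab : a < b := (mul_lt_mul_left_of_neg hCneg).mp (by rw [ha, hb]; linarith)
      have hI : I = Ioo a b := by
        ext s
        rw [hIdef]
        simp only [mem_setOf_eq, mem_Ioo]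
        constructor
        · intro h
          exact ⟨(mul_lt_mul_left_of_neg hCneg).mp (by rw [ha]; linarith [h.2]),
                 (mul_lt_mul_left_of_neg hCneg).mp (by rw [hb]; linarith [h.1])⟩
        · intro h
          have h1 := (mul_lt_mul_left_of_neg hCneg).mpr h.1
          have h2 := (mul_lt_mul_left_of_neg hCneg).mpr h.2
          rw [ha] at h1; rw [hb] at h2
          constructor <;> linarith
      have hlen : b - a = π / |C| := by
        rw [abs_of_neg hCneg, eq_div_iff (neg_ne_zero.mpr hC)]
        linear_combination ha - hb
      have hta : Tendsto (fun s => C*s+D) (𝓝[>] a) (𝓝[<] (π/2)) := by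
        have := tend_aff C D a (Ioi a) (Iio (π/2)) ?_
        · rwa [show C*a+D = π/2 by linarith [ha]] at this
        · intro x hx
          simp only [mem_Ioi] at hx
          simp only [mem_Iio]
          nlinarith [mul_pos (neg_pos.mpr hCneg) (sub_pos.mpr hx)]
      have htb : Tendsto (fun s => C*s+D) (𝓝[<] b) (𝓝[>] (-(π/2))) := by
        have := tend_aff C D b (Iio b) (Ioi (-(π/2))) ?_
        · rwa [show C*b+D = -(π/2) by linarith [hb]] at this
        · intro x hx
          simp only [mem_Iio] at hx
          simp only [mem_Ioi]
          nlinarith [mul_pos (neg_pos.mpr hCneg) (sub_pos.mpr hx)]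
      have hσa : Tendsto (fun s => |σ s|) (𝓝[>] a) atTop := by
        rw [hσdef]; exact abs_tan_top.comp hta
      have hσb : Tendsto (fun s => |σ s|) (𝓝[<] b) atTop := by
        rw [hσdef]; exact abs_tan_bot.comp htb
      have hevA : ∀ᶠ s in 𝓝[>] a, s ∈ I := by
        rw [hI]; exact Ioo_mem_nhdsGT_of_mem ⟨le_refl a, hab⟩
      have hevB : ∀ᶠ s in 𝓝[<] b, s ∈ I := by
        rw [hI]; exact Ioo_mem_nhdsLT_of_mem ⟨hab, le_refl b⟩
      exact ⟨a, b, hab, hI, hlen, hσa, hσb, hblow _ hevA hσa, hblow _ hevB hσb⟩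
    · -- C > 0
      set a := (-(π/2) - D)/C with hadef
      set b := (π/2 - D)/C with hbdef
      have ha : C * a = -(π/2) - D := by rw [hadef]; field_simp
      have hb : C * b = π/2 - D := by rw [hbdef]; field_simp
      have hab : a < b := by
        rw [← mul_lt_mul_iff_right₀ hCpos, ha, hb]; linarith
      have hI : I = Ioo a b := by
        ext s
        rw [hIdef]
        simp only [mem_setOf_eq, mem_Ioo]
        constructor
        · intro h
          constructor
          · rw [← mul_lt_mul_iff_right₀ hCpos, ha]; linarith [h.1]
          · rw [← mul_lt_mul_iff_right₀ hCpos, hb]; linarith [h.2]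
        · intro h
          have h1 := (mul_lt_mul_iff_right₀ hCpos).mpr h.1
          have h2 := (mul_lt_mul_iff_right₀ hCpos).mpr h.2
          rw [ha] at h1; rw [hb] at h2
          constructor <;> linarith
      have hlen : b - a = π / |C| := by
        rw [abs_of_pos hCpos, eq_div_iff hC]
        linear_combination hb - ha
      have hta : Tendsto (fun s => C*s+D) (𝓝[>] a) (𝓝[>] (-(π/2))) := by
        have := tend_aff C D a (Ioi a) (Ioi (-(π/2))) ?_
        · rwa [show C*a+D = -(π/2) by linarith [ha]] at this
        · intro x hx
          simp only [mem_Ioi] at hx ⊢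
          nlinarith [mul_pos hCpos (sub_pos.mpr hx)]
      have htb : Tendsto (fun s => C*s+D) (𝓝[<] b) (𝓝[<] (π/2)) := by
        have := tend_aff C D b (Iio b) (Iio (π/2)) ?_
        · rwa [show C*b+D = π/2 by linarith [hb]] at this
        · intro x hx
          simp only [mem_Iio] at hx ⊢
          nlinarith [mul_pos hCpos (sub_pos.mpr hx)]
      have hσa : Tendsto (fun s => |σ s|) (𝓝[>] a) atTop := by
        rw [hσdef]; exact abs_tan_bot.comp hta
      have hσb : Tendsto (fun s => |σ s|) (𝓝[<] b) atTop := by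
        rw [hσdef]; exact abs_tan_top.comp htb
      have hevA : ∀ᶠ s in 𝓝[>] a, s ∈ I := by
        rw [hI]; exact Ioo_mem_nhdsGT_of_mem ⟨le_refl a, hab⟩
      have hevB : ∀ᶠ s in 𝓝[<] b, s ∈ I := by
        rw [hI]; exact Ioo_mem_nhdsLT_of_mem ⟨hab, le_refl b⟩
      exact ⟨a, b, hab, hI, hlen, hσa, hσb, hblow _ hevA hσa, hblow _ hevB hσb⟩
  refine ⟨hdiff, hsecond, hpart3, hpart4, ?_⟩
  -- part 5 : no extension
  obtain ⟨a, b, hab, hIab, -, hba, hbb, -, -⟩ := hpart4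
  rintro ⟨J, τ, hconv, hsub, heqOn, hdiffτ, -⟩
  obtain ⟨x, hxJ, hxI⟩ := exists_of_ssubset hsub
  have hIJ := hsub.subset
  have hord := hconv.ordConnected
  have hcmem : (a+b)/2 ∈ I := by rw [hIab]; exact ⟨by linarith, by linarith⟩
  rw [hIab] at hxI
  simp only [mem_Ioo, not_and, not_lt] at hxI
  rcases le_or_gt x a with hxa | hax
  · -- endpoint a belongs to J
    have haJ : a ∈ J := hord.out hxJ (hIJ hcmem) ⟨hxa, by linarith⟩
    have hcont : Tendsto τ (𝓝[>] a) (𝓝 (τ a)) :=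
      ((hdiffτ a haJ).continuousAt.continuousWithinAt (s := Ioi a)).tendsto
    have h2 : Tendsto (fun s => |τ s|) (𝓝[>] a) (𝓝 |τ a|) :=
      ((continuous_abs.tendsto _).comp hcont : _)
    have h3 : Tendsto (fun s => |σ s|) (𝓝[>] a) (𝓝 |τ a|) := by
      apply h2.congr'
      filter_upwards [Ioo_mem_nhdsGT_of_mem ⟨le_refl a, hab⟩] with s hs
      rw [heqOn (by rw [hIab]; exact hs)]
    exact not_tendsto_atTop_of_tendsto_nhds h3 hba
  · -- endpoint b belongs to J
    have hbx : b ≤ x := hxI hax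
    have hbJ : b ∈ J := hord.out (hIJ hcmem) hxJ ⟨by linarith, hbx⟩
    have hcont : Tendsto τ (𝓝[<] b) (𝓝 (τ b)) :=
      ((hdiffτ b hbJ).continuousAt.continuousWithinAt (s := Iio b)).tendsto
    have h2 : Tendsto (fun s => |τ s|) (𝓝[<] b) (𝓝 |τ b|) :=
      ((continuous_abs.tendsto _).comp hcont : _)
    have h3 : Tendsto (fun s => |σ s|) (𝓝[<] b) (𝓝 |τ b|) := by
      apply h2.congr'
      filter_upwards [Ioo_mem_nhdsLT_of_mem ⟨hab, le_refl b⟩] with s hs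
      rw [heqOn (by rw [hIab]; exact hs)]
    exact not_tendsto_atTop_of_tendsto_nhds h3 hbb
end

section
/- Let E be a real inner product space, let v, w ∈ E, let a : [0,1] → ℝ be continuous, and let y, z : [0,1] → ℝ be differentiable functions satisfying y(0) = ‖v‖², z(0) = ⟨v,w⟩, y'(r) = −2·a(r)·z(r) and z'(r) = −a(r)·‖w‖² for all r ∈ [0,1]. Then y(1) = ‖(∫₀¹ a(r) dr)·w − v‖². -/
local notation "⟪" x ", " y "⟫_ℝ" => @inner ℝ _ _ x y
open Real Set Filter Topology

/-- if `y(0) = ‖v‖²`, `z(0) = ⟨v,w⟩`, `y' = −2·a·z` and `z' = −a·‖w‖²`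
on `[0,1]`, then `y(1) = ‖(∫₀¹ a)·w − v‖²`. -/
theorem stmt13 {E : Type*} [NormedAddCommGroup E] [InnerProductSpace ℝ E]
    (v w : E) (a : ℝ → ℝ) (ha : ContinuousOn a (Set.Icc 0 1))
    (y z : ℝ → ℝ)
    (hy0 : y 0 = ‖v‖ ^ 2) (hz0 : z 0 = ⟪v, w⟫_ℝ)
    (hy : ∀ r ∈ Set.Icc (0:ℝ) 1, HasDerivAt y (-2 * a r * z r) r)
    (hz : ∀ r ∈ Set.Icc (0:ℝ) 1, HasDerivAt z (-(a r) * ‖w‖ ^ 2) r) :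
    y 1 = ‖(∫ r in (0:ℝ)..1, a r) • w - v‖ ^ 2 := by
  -- extend `a` continuously to all of ℝ
  set b : ℝ → ℝ := fun r => a ((Set.projIcc (0:ℝ) 1 zero_le_one r : ℝ)) with hb_def
  have hb_cont : Continuous b :=
    ha.comp_continuous (continuous_projIcc.subtype_val)
      (fun x => (Set.projIcc (0:ℝ) 1 zero_le_one x).2)
  have hb_eq : ∀ r ∈ Set.Icc (0:ℝ) 1, b r = a r := by
    intro r hr
    simp [hb_def, Set.projIcc_of_mem zero_le_one hr]
  set A : ℝ → ℝ := fun r => ∫ t in (0:ℝ)..r, b t with hA_def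
  have hA0 : A 0 = 0 := by simp [hA_def]
  have hA_deriv : ∀ r : ℝ, HasDerivAt A (b r) r := by
    intro r
    exact intervalIntegral.integral_hasDerivAt_right (hb_cont.intervalIntegrable 0 r)
      (hb_cont.stronglyMeasurableAtFilter _ _) hb_cont.continuousAt
  have hA_deriv' : ∀ r ∈ Set.Icc (0:ℝ) 1, HasDerivAt A (a r) r := by
    intro r hr
    simpa [hb_eq r hr] using hA_deriv r
  -- step 1: z r = z 0 - ‖w‖² * A r on [0,1]
  have hzA : ∀ r ∈ Set.Icc (0:ℝ) 1, z r = z 0 - ‖w‖ ^ 2 * A r := by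
    have key : ∀ r ∈ Set.Icc (0:ℝ) 1,
        (fun r => z r + ‖w‖ ^ 2 * A r) r = (fun r => z r + ‖w‖ ^ 2 * A r) 0 := by
      apply constant_of_has_deriv_right_zero
      · intro r hr
        exact ((hz r hr).add (((hA_deriv' r hr).const_mul (‖w‖ ^ 2)))).continuousAt.continuousWithinAt
      · intro r hr
        have hr' : r ∈ Set.Icc (0:ℝ) 1 := Ico_subset_Icc_self hr
        have := (hz r hr').add ((hA_deriv' r hr').const_mul (‖w‖ ^ 2))
        have h0 : -(a r) * ‖w‖ ^ 2 + ‖w‖ ^ 2 * a r = 0 := by ring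
        rw [h0] at this
        exact this.hasDerivWithinAt
    intro r hr
    have := key r hr
    simp only [hA0, mul_zero, add_zero] at this
    linarith
  -- step 2: constancy of y r + 2 z 0 A r - ‖w‖² (A r)²
  have key2 : ∀ r ∈ Set.Icc (0:ℝ) 1,
      (fun r => y r + 2 * z 0 * A r - ‖w‖ ^ 2 * (A r) ^ 2) r
        = (fun r => y r + 2 * z 0 * A r - ‖w‖ ^ 2 * (A r) ^ 2) 0 := by
    apply constant_of_has_deriv_right_zero
    · intro r hr
      exact (((hy r hr).add ((hA_deriv' r hr).const_mul (2 * z 0))).sub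
        ((((hA_deriv' r hr).pow 2).const_mul (‖w‖ ^ 2)))).continuousAt.continuousWithinAt
    · intro r hr
      have hr' : r ∈ Set.Icc (0:ℝ) 1 := Ico_subset_Icc_self hr
      have hd := ((hy r hr').add ((hA_deriv' r hr').const_mul (2 * z 0))).sub
        (((hA_deriv' r hr').pow 2).const_mul (‖w‖ ^ 2))
      convert hd.hasDerivWithinAt using 1
      · rfl
      rw [hzA r hr']
      push_cast
      ring
  have hkey := key2 1 (by norm_num)
  simp only [hA0, mul_zero, add_zero, zero_pow, sub_zero] at hkey
  -- identify the integral with A 1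
  have hint : (∫ r in (0:ℝ)..1, a r) = A 1 := by
    simp only [hA_def]
    refine intervalIntegral.integral_congr ?_
    intro t ht
    rw [Set.uIcc_of_le zero_le_one] at ht
    exact (hb_eq t ht).symm
  rw [hint]
  have hexp : ‖A 1 • w - v‖ ^ 2 = (A 1) ^ 2 * ‖w‖ ^ 2 - 2 * A 1 * ⟪v, w⟫_ℝ + ‖v‖ ^ 2 := by
    rw [norm_sub_sq_real]
    rw [norm_smul, real_inner_smul_left, real_inner_comm]
    simp [mul_pow]
    ring
  rw [hexp, ← hz0]
  have : y 1 + 2 * z 0 * A 1 - ‖w‖ ^ 2 * A 1 ^ 2 = y 0 := by linarith [hkey]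
  rw [hy0] at this
  linarith
end
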